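/- Let H = ∗_{a∈A} H_a be a nontrivial free product and let B ∈ H be a simple word. If the word B^{-1} is B-periodic (i.e., B^{-1} occurs as a subword of B^k for some positive integer k), then there exist uniquely determined reduced words C_1, C_2 ∈ H such that B ≡ C_1 · C_2, B^{-1} ≡ C_2 · C_1, and C_1^2 = C_2^2 = 1. -/

import Mathlib

/-!
Common definitions: we model a nontrivial free product `H = ∗_{a ∈ A} H_a` as
`Monoid.CoprodI G` for a family of groups `G : ι → Type*` with `[Nontrivial ι]`
(the index set has at least two elements) and `∀ i, Nontrivial (G i)`
(all factors are nontrivial groups).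
-/

namespace FreeProdPaper

open Monoid

variable {ι : Type*} {G : ι → Type*} [∀ i, Group (G i)]

/-- An element of a free product is *hyperbolic* if it lies in no conjugate
`g⁻¹ H_a g` of a factor. -/
def IsHyperbolic (w : CoprodI G) : Prop :=
  ∀ (i : ι) (g : CoprodI G) (x : G i), w ≠ g⁻¹ * CoprodI.of x * g

/-- The reduced form (as the list of its syllables) of an element of a free product. -/
noncomputable def redList (w : CoprodI G) : List (Σ i, G i) :=
  letI := Classical.decEq ι
  letI : ∀ i, DecidableEq (G i) := fun _ => Classical.decEq _
  (CoprodI.Word.equiv w).toList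

/-- The (syllable) length `|w|` of an element of a free product:
the number of syllables of its reduced form. -/
noncomputable def len (w : CoprodI G) : ℕ := (redList w).length

/-- The cyclic length `|w|_c`: the length of a cyclically reduced word conjugate
to `w`, equivalently the minimal length of a conjugate of `w`. -/
noncomputable def cyclicLength (w : CoprodI G) : ℕ :=
  sInf (Set.range fun g : CoprodI G => len (g⁻¹ * w * g))

/-- A word is cyclically reduced iff it is nontrivial and has minimal length in
its conjugacy class (for a reduced word of length `≥ 2` this says exactly that its
first and last syllables lie in distinct factors). -/
def IsCyclicallyReduced (w : CoprodI G) : Prop :=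
  w ≠ 1 ∧ len w = cyclicLength w

/-- `w` is a proper power: `w = h ^ n` for some `h` and some `n ≥ 2`. -/
def IsProperPower (w : CoprodI G) : Prop :=
  ∃ (h : CoprodI G) (n : ℕ), 2 ≤ n ∧ w = h ^ n

/-- A *simple* word: a cyclically reduced word of length at least two that is not
a proper power. -/
def IsSimple (w : CoprodI G) : Prop :=
  IsCyclicallyReduced w ∧ 2 ≤ len w ∧ ¬ IsProperPower w

/-- The radical length `|w|_r` of a hyperbolic element `w = f⁻¹ ⬝ A^k ∘ f`
(`A` simple, `f` reduced, `k ≥ 1`) is `|A|`; equivalently, it is the least cyclic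
length of a root of `w`. -/
noncomputable def radicalLength (w : CoprodI G) : ℕ :=
  sInf {n | ∃ (h : CoprodI G) (k : ℕ), 0 < k ∧ w = h ^ k ∧ n = cyclicLength h}

/-- `u` is a *subword* of `w`: the reduced form of `w` is `f₁ ⬝ u ⬝ f₂`,
i.e. the reduced form of `u` occurs as a contiguous sublist of the reduced form
of `w`. -/
def IsSubword (u w : CoprodI G) : Prop :=
  ∃ l₁ l₂ : List (Σ i, G i), redList w = l₁ ++ redList u ++ l₂

/-- One step of bringing a list of syllables to reduced form which does not affect
the first or the last syllable of the word: two adjacent syllables from the same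
factor, not including the first or the last syllable of the word, are merged
(or cancelled, if their product is trivial). -/
def InnerStep (L L' : List (Σ i, G i)) : Prop :=
  ∃ (l₁ l₂ : List (Σ i, G i)) (i : ι) (a b : G i),
    l₁ ≠ [] ∧ l₂ ≠ [] ∧
    L = l₁ ++ ⟨i, a⟩ :: ⟨i, b⟩ :: l₂ ∧
    ((a * b = 1 ∧ L' = l₁ ++ l₂) ∨ (a * b ≠ 1 ∧ L' = l₁ ++ ⟨i, a * b⟩ :: l₂))

/-- `EndsUnaffected L w` : the concatenation `L` of syllables (of reduced words
whose product is `w`) can be brought to the reduced form of `w` by cancellations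
and mergings none of which affects the first or the last syllable. -/
def EndsUnaffected (L : List (Σ i, G i)) (w : CoprodI G) : Prop :=
  Relation.ReflTransGen InnerStep L (redList w)

/-- The commutator as used in the paper: `[x, y] = x⁻¹ y⁻¹ x y`. -/
def pcomm {H : Type*} [Group H] (x y : H) : H := x⁻¹ * y⁻¹ * x * y

/-- The word `L₂(z₀, z₁)` from the paper. -/
def L2 {H : Type*} [Group H] (x y : H) : H :=
  pcomm (x ^ 10) (y ^ 10) ^ 5000 * x * pcomm (x ^ 10) (y ^ 10) ^ 200 * y *
    pcomm (x ^ 10) (y ^ 10) ^ 400 * x⁻¹ * pcomm (x ^ 10) (y ^ 10) ^ 600 * y⁻¹ *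
    pcomm (x ^ 10) (y ^ 10) ^ 5000

/-- The words `E_{k̲[j,0]}`: `Ew k y j` is `E_{k̲[j+1,0]}(y₀, …, y_j)`, defined by
`E_{k̲[1,0]}(z₀) = z₀^{k₀}` and
`E_{k̲[j,0]}(z₀,…,z_{j-1}) = [E_{k̲[j-1,0]}(z₀,…,z_{j-2})², z_{j-1}^{2 k_{j-1}}]`. -/
def Ew {H : Type*} [Group H] (k : ℕ → ℕ) (y : ℕ → H) : ℕ → H
  | 0 => y 0 ^ k 0
  | j + 1 => pcomm (Ew k y j ^ 2) (y (j + 1) ^ (2 * k (j + 1)))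

/-- The words `E_n`: `En y j` is `E_{j+1}(y₀, …, y_j)`, defined by
`E₂(z₀, z₁) = [z₀², z₁²]` and `E_n(z₀,…,z_{n-1}) = [E_{n-1}(z₀,…,z_{n-2})², z_{n-1}²]`. -/
def En {H : Type*} [Group H] (y : ℕ → H) : ℕ → H
  | 0 => y 0
  | j + 1 => pcomm (En y j ^ 2) (y (j + 1) ^ 2)

/-- A subgroup `K` of `Γ` is *verbally closed* if every equation
`w(x₁,…,xₙ) = h` (with `w` in the free group and `h ∈ K`) having a solution
in `Γ` also has a solution in `K`. -/
def IsVerballyClosed {Γ : Type*} [Group Γ] (K : Subgroup Γ) : Prop :=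
  ∀ (n : ℕ) (w : FreeGroup (Fin n)) (h : Γ), h ∈ K →
    (∃ x : Fin n → Γ, FreeGroup.lift x w = h) →
    ∃ y : Fin n → Γ, (∀ i, y i ∈ K) ∧ FreeGroup.lift y w = h

/-- A subgroup `K` of `Γ` is *algebraically closed in `Γ`* if every finite system
of equations `w_j(x₁,…,xₙ, K) = 1` with coefficients in `K` (i.e. `w_j` lies in
the free product of the free group `F_n` and `K`) having a solution in `Γ`
also has a solution in `K`. -/
def IsAlgebraicallyClosedIn {Γ : Type*} [Group Γ] (K : Subgroup Γ) : Prop :=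
  ∀ (n m : ℕ) (w : Fin m → Monoid.Coprod (FreeGroup (Fin n)) K),
    (∃ x : Fin n → Γ, ∀ j, Monoid.Coprod.lift (FreeGroup.lift x) K.subtype (w j) = 1) →
    ∃ y : Fin n → Γ, (∀ i, y i ∈ K) ∧
      ∀ j, Monoid.Coprod.lift (FreeGroup.lift y) K.subtype (w j) = 1

end FreeProdPaper

/-!
Let `L` be the reduced form of `B`. As `B` is cyclically reduced, the reduced form of `B^k` is
`L^k`, and that of `B⁻¹` is `L` reversed with inverted syllables. A subword of `L^k` of length `|L|`
is a rotation of `L`, so `L = a ++ b` and `B⁻¹ ≡ b ++ a`; comparing with `B⁻¹ ≡ b⁻¹ ++ a⁻¹` gives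
`a⁻¹ ≡ a` and `b⁻¹ ≡ b`, i.e. both halves square to `1`. Two different such splittings would make
two different rotations of `L` coincide, so `L` would be fixed by a nontrivial rotation; by the
Fine–Wilf periodicity lemma `L` is then a proper power of a shorter word, and so is `B`.
-/

namespace List

variable {α : Type*}

def IsPrimitive (L : List α) : Prop :=
  ∀ (u : List α) (m : ℕ), (replicate m u).flatten = L → m ≤ 1

theorem getElem_flatten_replicate {L : List α} {k i : ℕ}
    (h : i < (replicate k L).flatten.length) :
    (replicate k L).flatten[i] = L[i % L.length]'(Nat.mod_lt _ (by
      rw [length_flatten, map_replicate, sum_replicate, smul_eq_mul] at h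
      exact Nat.pos_of_mul_pos_left (Nat.zero_lt_of_lt h))) := by
  induction k generalizing i with
  | zero => simp at h
  | succ k ih =>
    simp only [replicate_succ, flatten_cons] at h ⊢
    rw [getElem_append]
    split_ifs with hi
    · simp [Nat.mod_eq_of_lt hi]
    · rw [ih]
      congr 1
      exact (Nat.mod_eq_sub_mod (not_lt.1 hi)).symm

theorem IsInfix.isRotated_of_flatten_replicate {L M : List α} {k : ℕ}
    (h : M <:+: (replicate k L).flatten) (hlen : M.length = L.length) : L ~r M := by
  obtain ⟨s, t, hst⟩ := h
  rw [append_assoc] at hst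
  refine ⟨s.length, ext_getElem (by simp [hlen]) fun j _ hj => ?_⟩
  rw [getElem_rotate, getElem_append_left' hj t, getElem_append_right' s (l₂ := M ++ t),
    getElem_of_eq hst, getElem_flatten_replicate]

theorem IsRotated.exists_append_eq {L M : List α} (h : L ~r M) :
    ∃ a b, L = a ++ b ∧ M = b ++ a := by
  obtain ⟨p, hp, rfl⟩ := isRotated_iff_mod.1 h
  exact ⟨take p L, drop p L, (take_append_drop p L).symm, rotate_eq_drop_append_take hp⟩

theorem HasPeriod.flatten_replicate_take {L : List α} {g : ℕ} (h : L.HasPeriod g)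
    (hg : g ∣ L.length) : (replicate (L.length / g) (L.take g)).flatten = L := by
  rcases eq_or_ne L [] with rfl | hL
  · simp
  have hgL : g ≤ L.length := Nat.le_of_dvd (length_pos_iff.2 hL) hg
  have hg0 : 0 < g := Nat.pos_of_dvd_of_pos hg (length_pos_iff.2 hL)
  refine ext_getElem (by simp [hgL, Nat.div_mul_cancel hg]) fun i _ hi => ?_
  have hmod := h.getElem?_mod g i L hi
  rw [getElem?_eq_getElem ((Nat.mod_lt i hg0).trans_le hgL), getElem?_eq_getElem hi,
    Option.some_inj] at hmod
  rw [getElem_flatten_replicate, getElem_take, ← hmod]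
  simp [hgL]

theorem exists_flatten_replicate_of_rotate_eq_self {L : List α} {d : ℕ} (hd : 0 < d)
    (hdL : d < L.length) (h : L.rotate d = L) :
    ∃ u m, 2 ≤ m ∧ (replicate m u).flatten = L := by
  have hcomm : take d L ++ L = L ++ take d L := by
    have hL : drop d L ++ take d L = L := by rw [← rotate_eq_drop_append_take hdL.le, h]
    calc take d L ++ L = take d L ++ (drop d L ++ take d L) := by rw [hL]
      _ = L ++ take d L := by rw [← append_assoc, take_append_drop]
  -- `L ++ L` is long enough for Fine–Wilf to combine the periods `d` and `|L|`.
  have hperd : (L ++ L).HasPeriod d := by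
    rw [HasPeriod, take_append_of_le_length hdL.le, ← append_assoc, hcomm, append_assoc, hcomm,
      ← append_assoc]
    exact prefix_append _ _
  have hpern : (L ++ L).HasPeriod L.length := by
    rw [HasPeriod, take_left, ← append_assoc]
    exact prefix_append _ _
  have hg : L.HasPeriod (d.gcd L.length) :=
    (hperd.gcd hpern (by simp only [length_append]; omega)).infix (prefix_append L L).isInfix
  refine ⟨take (d.gcd L.length) L, L.length / d.gcd L.length, ?_,
    hg.flatten_replicate_take (Nat.gcd_dvd_right _ _)⟩
  obtain ⟨c, hc⟩ := Nat.gcd_dvd_right d L.length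
  have hg0 : 0 < d.gcd L.length := Nat.gcd_pos_of_pos_left _ hd
  have hgd : d.gcd L.length ≤ d := Nat.gcd_le_left _ hd
  rw [Nat.le_div_iff_mul_le hg0]
  generalize d.gcd L.length = g at *
  rcases c with _ | _ | c <;> nlinarith

theorem IsPrimitive.eq_of_rotate_eq {L : List α} (hL : L.IsPrimitive) {p q : ℕ}
    (hp : p < L.length) (hq : q < L.length) (h : L.rotate p = L.rotate q) : p = q := by
  wlog hpq : p ≤ q generalizing p q
  · exact (this hq hp h.symm (le_of_not_ge hpq)).symm
  by_contra hne
  have hrot : L.rotate (q - p) = L := by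
    rw [← rotate_eq_rotate (n := p), rotate_rotate, Nat.sub_add_cancel hpq, h]
  obtain ⟨u, m, hm, hu⟩ := exists_flatten_replicate_of_rotate_eq_self (by omega) (by omega) hrot
  exact absurd (hL u m hu) (by omega)

theorem IsPrimitive.eq_of_append_eq_of_swap {a b a' b' : List α} (hL : (a ++ b).IsPrimitive)
    (h : a ++ b = a' ++ b') (hswap : b ++ a = b' ++ a') (hne : b ++ a ≠ a ++ b) :
    a = a' ∧ b = b' := by
  have hb : b ≠ [] := by rintro rfl; simp at hne
  have hb' : b' ≠ [] := by
    rintro rfl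
    exact hne (by simpa [h] using hswap)
  refine append_inj h (hL.eq_of_rotate_eq ?_ ?_ ?_)
  · simpa using length_pos_iff.2 hb
  · simpa [h] using length_pos_iff.2 hb'
  · rw [rotate_append_length_eq, h, rotate_append_length_eq, hswap]

end List

namespace FreeProdPaper

open Monoid

variable {ι : Type*} {G : ι → Type*} [∀ i, Group (G i)]

def listProd (L : List (Σ i, G i)) : CoprodI G :=
  (L.map fun l => CoprodI.of l.2).prod

def IsReducedList (L : List (Σ i, G i)) : Prop :=
  (∀ l ∈ L, l.2 ≠ 1) ∧ L.IsChain fun a b => a.1 ≠ b.1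

def revInv (L : List (Σ i, G i)) : List (Σ i, G i) :=
  (L.map fun l => ⟨l.1, l.2⁻¹⟩).reverse

theorem redList_eq_toList [DecidableEq ι] [∀ i, DecidableEq (G i)] (w : CoprodI G) :
    redList w = (CoprodI.Word.equiv w).toList := by
  unfold redList
  congr!

theorem listProd_redList (w : CoprodI G) : listProd (redList w) = w := by
  classical
  rw [redList_eq_toList]
  exact CoprodI.Word.equiv.symm_apply_apply w

theorem redList_injective : Function.Injective (redList (G := G)) := fun w w' h => by
  rw [← listProd_redList w, h, listProd_redList]

theorem isReducedList_redList (w : CoprodI G) : IsReducedList (redList w) := by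
  classical
  rw [redList_eq_toList]
  exact ⟨(CoprodI.Word.equiv w).ne_one, (CoprodI.Word.equiv w).chain_ne⟩

theorem redList_listProd {L : List (Σ i, G i)} (hL : IsReducedList L) :
    redList (listProd L) = L := by
  classical
  rw [redList_eq_toList]
  exact congrArg CoprodI.Word.toList (CoprodI.Word.equiv.apply_symm_apply ⟨L, hL.1, hL.2⟩)

theorem IsReducedList.infix {L L' : List (Σ i, G i)} (hL : IsReducedList L) (h : L' <:+: L) :
    IsReducedList L' :=
  ⟨fun l hl => hL.1 l (h.subset hl), hL.2.infix h⟩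

@[simp] theorem listProd_nil : listProd ([] : List (Σ i, G i)) = 1 := rfl

@[simp] theorem listProd_cons (l : Σ i, G i) (L : List (Σ i, G i)) :
    listProd (l :: L) = CoprodI.of l.2 * listProd L := List.prod_cons

@[simp] theorem listProd_append (L L' : List (Σ i, G i)) :
    listProd (L ++ L') = listProd L * listProd L' := by
  simp [listProd]

theorem listProd_flatten_replicate (k : ℕ) (L : List (Σ i, G i)) :
    listProd (List.replicate k L).flatten = listProd L ^ k := by
  simp [listProd, List.map_flatten, List.prod_flatten]

@[simp] theorem redList_one : redList (1 : CoprodI G) = [] :=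
  redList_listProd (L := []) ⟨by simp, List.isChain_nil⟩

@[simp] theorem length_revInv (L : List (Σ i, G i)) : (revInv L).length = L.length := by
  simp [revInv]

theorem revInv_append (L L' : List (Σ i, G i)) : revInv (L ++ L') = revInv L' ++ revInv L := by
  simp [revInv]

theorem listProd_revInv (L : List (Σ i, G i)) : listProd (revInv L) = (listProd L)⁻¹ := by
  simp [listProd, revInv, List.prod_inv_reverse, Function.comp_def]

theorem IsReducedList.revInv {L : List (Σ i, G i)} (hL : IsReducedList L) :
    IsReducedList (revInv L) := by
  refine ⟨fun l hl => ?_, ?_⟩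
  · simp only [FreeProdPaper.revInv, List.mem_reverse, List.mem_map] at hl
    obtain ⟨x, hx, rfl⟩ := hl
    simpa using hL.1 x hx
  · rw [FreeProdPaper.revInv, List.isChain_reverse, List.isChain_map]
    exact hL.2.imp fun a b h => h.symm

theorem redList_inv (w : CoprodI G) : redList w⁻¹ = revInv (redList w) := by
  conv_lhs => rw [← listProd_redList w, ← listProd_revInv]
  exact redList_listProd (isReducedList_redList w).revInv

theorem len_of_mul_le {i : ι} (x : G i) (w : CoprodI G) :
    len (CoprodI.of x * w) ≤ len w + 1 := by
  classical
  simp only [len, redList_eq_toList]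
  have hlen (p : CoprodI.Word.Pair G i) :
      p.tail.toList.length ≤ (CoprodI.Word.rcons p).toList.length ∧
        (CoprodI.Word.rcons p).toList.length ≤ p.tail.toList.length + 1 := by
    unfold CoprodI.Word.rcons
    split <;> simp
  have htail := (hlen (CoprodI.Word.equivPair i (CoprodI.Word.equiv w))).1
  rw [← CoprodI.Word.equivPair_symm, Equiv.symm_apply_apply] at htail
  rw [show CoprodI.Word.equiv (CoprodI.of x * w) = CoprodI.of x • CoprodI.Word.equiv w by
    simp only [CoprodI.Word.equiv, Equiv.coe_fn_mk]; exact mul_smul _ _ _,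
    CoprodI.Word.of_smul_def]
  exact (hlen _).2.trans (Nat.add_le_add_right htail 1)

theorem len_listProd_le (L : List (Σ i, G i)) : len (listProd L) ≤ L.length := by
  induction L with
  | nil => simp [len]
  | cons l L ih => simpa using (len_of_mul_le l.2 _).trans (Nat.add_le_add_right ih 1)

theorem cyclicLength_le_len_conj (w g : CoprodI G) : cyclicLength w ≤ len (g⁻¹ * w * g) :=
  Nat.sInf_le ⟨g, rfl⟩

theorem IsCyclicallyReduced.getLast_fst_ne_head_fst {w : CoprodI G}
    (hw : IsCyclicallyReduced w) (h2 : 2 ≤ len w) :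
    ∀ x ∈ (redList w).getLast?, ∀ y ∈ (redList w).head?, x.1 ≠ y.1 := by
  intro x hx y hy hxy
  obtain ⟨mid, hmid⟩ : ∃ mid, redList w = y :: (mid ++ [x]) := by
    rw [len] at h2
    rcases hL : redList w with _ | ⟨y', t⟩
    · simp [hL] at h2
    rcases t.eq_nil_or_concat with rfl | ⟨mid, x', rfl⟩
    · simp [hL] at h2
    simp_all [List.getLast?_cons]
  obtain ⟨i, b⟩ := x
  obtain ⟨j, a⟩ := y
  dsimp only at hxy
  subst hxy
  -- conjugating by the first syllable merges it into the last one, shortening the word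
  have hconj : (CoprodI.of a)⁻¹ * w * CoprodI.of a = listProd (mid ++ [⟨i, b * a⟩]) := by
    rw [← listProd_redList w, hmid]
    simp [mul_assoc]
  have hle := (cyclicLength_le_len_conj w (CoprodI.of a)).trans
    (hconj ▸ len_listProd_le (mid ++ [(⟨i, b * a⟩ : Σ i, G i)]))
  rw [← hw.2, len, hmid] at hle
  simp at hle

theorem IsReducedList.flatten_replicate {L : List (Σ i, G i)} (hL : IsReducedList L)
    (hcyc : ∀ x ∈ L.getLast?, ∀ y ∈ L.head?, x.1 ≠ y.1) (k : ℕ) :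
    IsReducedList (List.replicate k L).flatten := by
  rcases eq_or_ne L [] with rfl | hne
  · simpa using ⟨by simp, List.isChain_nil⟩
  refine ⟨by simpa using fun l _ hl => hL.1 l hl, ?_⟩
  rw [List.isChain_flatten (by simp [hne.symm])]
  exact ⟨by simpa using fun _ => hL.2, List.isChain_replicate_of_rel k hcyc⟩

theorem redList_pow {w : CoprodI G}
    (hcyc : ∀ x ∈ (redList w).getLast?, ∀ y ∈ (redList w).head?, x.1 ≠ y.1) (k : ℕ) :
    redList (w ^ k) = (List.replicate k (redList w)).flatten := by
  conv_lhs => rw [← listProd_redList w, ← listProd_flatten_replicate]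
  exact redList_listProd ((isReducedList_redList w).flatten_replicate hcyc k)

theorem sq_eq_one_of_redList_swap {w c₁ c₂ : CoprodI G}
    (h₁ : redList w = redList c₁ ++ redList c₂) (h₂ : redList w⁻¹ = redList c₂ ++ redList c₁) :
    c₁ ^ 2 = 1 ∧ c₂ ^ 2 = 1 := by
  rw [redList_inv, h₁, revInv_append, ← redList_inv, ← redList_inv] at h₂
  obtain ⟨e₂, e₁⟩ := List.append_inj h₂ (by simp [redList_inv])
  have key (c : CoprodI G) (hc : redList c⁻¹ = redList c) : c ^ 2 = 1 := by
    rw [pow_two, mul_eq_one_iff_eq_inv, redList_injective hc]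
  exact ⟨key c₁ e₁, key c₂ e₂⟩

theorem isPrimitive_redList {w : CoprodI G} (hw : ¬ IsProperPower w) :
    (redList w).IsPrimitive := by
  intro u m hu
  by_contra! hm
  exact hw ⟨listProd u, m, hm, by rw [← listProd_flatten_replicate, hu, listProd_redList]⟩

theorem inverse_B_periodic_general
    {ι : Type*} {G : ι → Type*} [∀ i, Group (G i)]
    (B : Monoid.CoprodI G) (hB : IsSimple B)
    (hper : ∃ k : ℕ, 0 < k ∧ IsSubword B⁻¹ (B ^ k)) :
    ∃! p : Monoid.CoprodI G × Monoid.CoprodI G,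
      redList B = redList p.1 ++ redList p.2 ∧
      redList B⁻¹ = redList p.2 ++ redList p.1 ∧
      p.1 ^ 2 = 1 ∧ p.2 ^ 2 = 1 := by
  obtain ⟨hcr, hlen, hnp⟩ := hB
  have hpow := redList_pow (hcr.getLast_fst_ne_head_fst hlen)
  obtain ⟨k, -, l₁, l₂, hsub⟩ := hper
  rw [hpow] at hsub
  have hrot : redList B ~r redList B⁻¹ :=
    List.IsInfix.isRotated_of_flatten_replicate ⟨l₁, l₂, hsub.symm⟩ (by simp [redList_inv])
  obtain ⟨a, b, hsplit, hswap⟩ := hrot.exists_append_eq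
  have hred := isReducedList_redList B
  have ha := redList_listProd (hred.infix (hsplit ▸ (List.prefix_append a b).isInfix))
  have hb := redList_listProd (hred.infix (hsplit ▸ (List.suffix_append a b).isInfix))
  have hne : b ++ a ≠ a ++ b := by
    rw [← hswap, ← hsplit]
    intro h
    have hsq := hpow 2
    rw [pow_two, inv_eq_iff_mul_eq_one.1 (redList_injective h), redList_one] at hsq
    simp at hsq
    simp [len, hsq] at hlen
  refine ⟨(listProd a, listProd b), ?_, ?_⟩
  · have h₁ : redList B = redList (listProd a) ++ redList (listProd b) := by rw [ha, hb, hsplit]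
    have h₂ : redList B⁻¹ = redList (listProd b) ++ redList (listProd a) := by rw [ha, hb, hswap]
    exact ⟨h₁, h₂, sq_eq_one_of_redList_swap h₁ h₂⟩
  · rintro ⟨c₁, c₂⟩ ⟨h₁, h₂, -⟩
    obtain ⟨e₁, e₂⟩ := (hsplit ▸ isPrimitive_redList hnp).eq_of_append_eq_of_swap
      (hsplit.symm.trans h₁) (hswap.symm.trans h₂) hne
    exact Prod.ext (redList_injective (ha.trans e₁).symm) (redList_injective (hb.trans e₂).symm)

/-- **(Lemma 1, P3).** If `B` is simple and `B⁻¹` is `B`-periodic (a subword of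
some power `B^k`), then there are unique reduced words `C₁, C₂` with
`B ≡ C₁ ⬝ C₂`, `B⁻¹ ≡ C₂ ⬝ C₁` and `C₁² = C₂² = 1`. -/
theorem inverse_B_periodic
    {ι : Type*} [Nontrivial ι] {G : ι → Type*} [∀ i, Group (G i)]
    (hG : ∀ i, Nontrivial (G i))
    (B : Monoid.CoprodI G) (hB : IsSimple B)
    (hper : ∃ k : ℕ, 0 < k ∧ IsSubword B⁻¹ (B ^ k)) :
    ∃! p : Monoid.CoprodI G × Monoid.CoprodI G,
      redList B = redList p.1 ++ redList p.2 ∧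
      redList B⁻¹ = redList p.2 ++ redList p.1 ∧
      p.1 ^ 2 = 1 ∧ p.2 ^ 2 = 1 :=
  inverse_B_periodic_general B hB hper

end FreeProdPaper
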